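/- On the even part Λ₊ of ⋀(ℂ^g) the Hodge star satisfies λ_A ∗ = − ∗ a_A and a_A ∗ = ∗ λ_A, while on the odd part Λ₋ it satisfies λ_A ∗ = ∗ a_A and a_A ∗ = − ∗ λ_A. -/

import Mathlib

/-!
On all of `Λ` one has `λ_A ∗ = -∗ a_A (-1)^F` and `a_A ∗ = ∗ λ_A (-1)^F`, where the parity operator
`(-1)^F` is `1` on `Λ₊` and `-1` on `Λ₋`. On coefficients both identities reduce to the sign rule
`e_{S ∪ {A}} ∧ e_U = (-1)^(#{t ∈ S ∪ U | t < A} + |S|) e_S ∧ e_{U ∪ {A}}` for `A ∉ S ∪ U`.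
-/

open scoped BigOperators
noncomputable section

/-- Model of the exterior algebra Λ = ⋀(ℂ^g): coefficient functions on subsets of `Fin g`,
with the Hermitian inner product making the basis monomials orthonormal. -/
abbrev Lam (g : ℕ) : Type := EuclideanSpace ℂ (Finset (Fin g))

/-- Sign such that `e_S ∧ e_T = wsign S T • e_{S ∪ T}` for disjoint `S`, `T`. -/
def wsign (g : ℕ) (S T : Finset (Fin g)) : ℂ :=
  (-1) ^ (∑ s ∈ S, (T.filter (fun t => t < s)).card)

/-- The Hodge star `∗` with respect to the volume form `ω = e₁ ∧ … ∧ e_g`,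
characterized by `⟨∗β, α⟩ = ⟨ω, β̄ ∧ α⟩`; concretely `(∗ψ) T = wsign Tᶜ T * ψ Tᶜ`. -/
def hodge (g : ℕ) : Lam g →ₗ[ℂ] Lam g where
  toFun ψ := WithLp.toLp 2 (fun T => wsign g Tᶜ T * ψ Tᶜ)
  map_add' x y := by ext T; simp [mul_add]
  map_smul' c x := by ext T; simp; ring

/-- Creation operator λ_A = e_A ∧ ·. -/
def crea (g : ℕ) (A : Fin g) : Lam g →ₗ[ℂ] Lam g where
  toFun ψ := WithLp.toLp 2 (fun T : Finset (Fin g) =>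
    if A ∈ T then (-1 : ℂ) ^ ((T.filter (fun t => t < A)).card) * ψ (T.erase A) else 0)
  map_add' x y := by ext T; by_cases h : A ∈ T <;> simp [h, mul_add]
  map_smul' c x := by ext T; by_cases h : A ∈ T <;> simp [h]; ring

/-- Annihilation operator a_A = λ_A† (interior product with e_A). -/
def anni (g : ℕ) (A : Fin g) : Lam g →ₗ[ℂ] Lam g where
  toFun ψ := WithLp.toLp 2 (fun T : Finset (Fin g) =>
    if A ∈ T then 0 else (-1 : ℂ) ^ ((T.filter (fun t => t < A)).card) * ψ (insert A T))
  map_add' x y := by ext T; by_cases h : A ∈ T <;> simp [h, mul_add]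
  map_smul' c x := by ext T; by_cases h : A ∈ T <;> simp [h]; ring

/-- Fermion parity operator `(−1)^F`, equal to `(+1)` on Λ₊ and `(−1)` on Λ₋. -/
def parity (g : ℕ) : Lam g →ₗ[ℂ] Lam g where
  toFun ψ := WithLp.toLp 2 (fun T => (-1 : ℂ) ^ T.card * ψ T)
  map_add' x y := by ext T; simp [mul_add]
  map_smul' c x := by ext T; simp; ring

lemma Finset.card_filter_lt_add_card_filter_gt {α : Type*} [LinearOrder α] {a : α} {s : Finset α}
    (ha : a ∉ s) : (s.filter (· < a)).card + (s.filter (a < ·)).card = s.card := by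
  rw [← Finset.card_filter_add_card_filter_not (p := (· < a)) (s := s)]
  congr 2
  refine Finset.filter_congr fun t ht => ?_
  have : t ≠ a := ne_of_mem_of_not_mem ht ha
  simp only [not_lt]
  exact ⟨fun h => h.le, fun h => lt_of_le_of_ne h this.symm⟩

lemma neg_one_pow_mul_self {R : Type*} [Monoid R] [HasDistribNeg R] (n : ℕ) :
    (-1 : R) ^ n * (-1) ^ n = 1 := by
  rw [← pow_add, ← two_mul, pow_mul, neg_one_sq, one_pow]

section

variable {g : ℕ}

@[simp]
lemma hodge_apply (ψ : Lam g) (T : Finset (Fin g)) : hodge g ψ T = wsign g Tᶜ T * ψ Tᶜ := rfl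

@[simp]
lemma crea_apply (A : Fin g) (ψ : Lam g) (T : Finset (Fin g)) :
    crea g A ψ T =
      if A ∈ T then (-1 : ℂ) ^ (T.filter (· < A)).card * ψ (T.erase A) else 0 := rfl

@[simp]
lemma anni_apply (A : Fin g) (ψ : Lam g) (T : Finset (Fin g)) :
    anni g A ψ T =
      if A ∈ T then 0 else (-1 : ℂ) ^ (T.filter (· < A)).card * ψ (insert A T) := rfl

@[simp]
lemma parity_apply (ψ : Lam g) (T : Finset (Fin g)) : parity g ψ T = (-1 : ℂ) ^ T.card * ψ T :=
  rfl

lemma parity_eq_self_of_even (ψ : Lam g) (hψ : ∀ T, Odd T.card → ψ T = 0) : parity g ψ = ψ := by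
  ext T
  rcases Nat.even_or_odd T.card with h | h
  · simp [h.neg_one_pow]
  · simp [hψ T h]

lemma parity_eq_neg_of_odd (ψ : Lam g) (hψ : ∀ T, Even T.card → ψ T = 0) : parity g ψ = -ψ := by
  ext T
  rcases Nat.even_or_odd T.card with h | h
  · simp [hψ T h]
  · simp [h.neg_one_pow]

lemma wsign_insert_left {A : Fin g} {S : Finset (Fin g)} (hA : A ∉ S) (U : Finset (Fin g)) :
    wsign g (insert A S) U = (-1 : ℂ) ^ (U.filter (· < A)).card * wsign g S U := by
  rw [wsign, Finset.sum_insert hA, pow_add, wsign]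

lemma wsign_insert_right (S : Finset (Fin g)) {A : Fin g} {U : Finset (Fin g)} (hA : A ∉ U) :
    wsign g S (insert A U) = (-1 : ℂ) ^ (S.filter (A < ·)).card * wsign g S U := by
  have hcard (s : Fin g) : ((insert A U).filter (· < s)).card =
      (if A < s then 1 else 0) + (U.filter (· < s)).card := by
    rw [Finset.filter_insert]
    split_ifs with h
    · rw [Finset.card_insert_of_notMem fun hm => hA (Finset.mem_filter.mp hm).1, add_comm]
    · rw [zero_add]
  rw [wsign, wsign, ← pow_add, Finset.sum_congr rfl fun s _ => hcard s, Finset.sum_add_distrib,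
    ← Finset.card_filter]

lemma wsign_insert_left_eq_insert_right {A : Fin g} {S U : Finset (Fin g)} (hS : A ∉ S)
    (hU : A ∉ U) :
    wsign g (insert A S) U =
      (-1 : ℂ) ^ ((U.filter (· < A)).card + (S.filter (· < A)).card + S.card) *
        wsign g S (insert A U) := by
  rw [wsign_insert_left hS, wsign_insert_right S hU, ← mul_assoc, ← pow_add]
  have hsplit := Finset.card_filter_lt_add_card_filter_gt hS
  rw [neg_one_pow_eq_pow_mod_two, neg_one_pow_eq_pow_mod_two (_ + _)]
  congr 2
  omega

lemma crea_hodge (A : Fin g) (ψ : Lam g) :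
    crea g A (hodge g ψ) = -hodge g (anni g A (parity g ψ)) := by
  ext T
  by_cases hT : A ∈ T
  · have hS : A ∉ Tᶜ := Finset.notMem_compl.mpr hT
    have hU : A ∉ T.erase A := Finset.notMem_erase A T
    have hUc : (T.erase A)ᶜ = insert A Tᶜ := Finset.compl_erase
    simp only [crea_apply, anni_apply, hodge_apply, parity_apply, if_pos hT, if_neg hS, hUc,
      PiLp.neg_apply]
    have hcard : ((T.erase A).filter (· < A)).card = (T.filter (· < A)).card := by
      rw [Finset.filter_erase, Finset.erase_eq_of_notMem (by simp)]
    rw [wsign_insert_left_eq_insert_right hS hU, Finset.insert_erase hT, hcard,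
      Finset.card_insert_of_notMem hS]
    linear_combination ((-1 : ℂ) ^ (Tᶜ.filter (· < A)).card * (-1) ^ Tᶜ.card * wsign g Tᶜ T *
      ψ (insert A Tᶜ)) * neg_one_pow_mul_self (R := ℂ) (T.filter (· < A)).card
  · simp [hT]

lemma anni_hodge (A : Fin g) (ψ : Lam g) :
    anni g A (hodge g ψ) = hodge g (crea g A (parity g ψ)) := by
  ext T
  by_cases hT : A ∈ T
  · simp [hT]
  · have hTc : A ∈ Tᶜ := Finset.mem_compl.mpr hT
    set S := Tᶜ.erase A
    have hS : A ∉ S := Finset.notMem_erase A Tᶜ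
    have hTc_eq : Tᶜ = insert A S := (Finset.insert_erase hTc).symm
    have hc : (insert A T)ᶜ = S := Finset.compl_insert
    have hcard : ((insert A S).filter (· < A)).card = (S.filter (· < A)).card := by
      simp [Finset.filter_insert]
    simp only [crea_apply, anni_apply, hodge_apply, parity_apply, if_neg hT, if_pos hTc, hc]
    rw [hTc_eq, Finset.erase_insert hS, wsign_insert_left_eq_insert_right hS hT, hcard]
    linear_combination (-(-1 : ℂ) ^ (T.filter (· < A)).card * wsign g S (insert A T) * ψ S) *
      ((-1 : ℂ) ^ S.card * (-1) ^ S.card * neg_one_pow_mul_self (R := ℂ) (S.filter (· < A)).card +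
        neg_one_pow_mul_self (R := ℂ) S.card)

end

/-- on the even part `Λ₊` the Hodge star satisfies `λ_A ∗ = −∗ a_A` and
`a_A ∗ = ∗ λ_A`, while on the odd part `Λ₋` it satisfies `λ_A ∗ = ∗ a_A` and
`a_A ∗ = −∗ λ_A`. -/
theorem hodge_crea_anni_on_even_odd (g : ℕ) (A : Fin g) :
    (∀ ψ : Lam g, (∀ T, Odd T.card → ψ T = 0) →
      crea g A (hodge g ψ) = -(hodge g (anni g A ψ)) ∧
      anni g A (hodge g ψ) = hodge g (crea g A ψ)) ∧
    (∀ ψ : Lam g, (∀ T, Even T.card → ψ T = 0) →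
      crea g A (hodge g ψ) = hodge g (anni g A ψ) ∧
      anni g A (hodge g ψ) = -(hodge g (crea g A ψ))) := by
  refine ⟨fun ψ hψ => ?_, fun ψ hψ => ?_⟩
  · rw [crea_hodge, anni_hodge, parity_eq_self_of_even ψ hψ]
    exact ⟨rfl, rfl⟩
  · rw [crea_hodge, anni_hodge, parity_eq_neg_of_odd ψ hψ]
    simp only [map_neg, neg_neg, and_self]
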